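/- arXiv:1609.04933 — 3 statements merged into one kernel-verified Lean document; each statement's English description precedes it below -/
import Mathlib

section
/- Let f : M → S be a continuous map between topological spaces, where S is Hausdorff. Assume f is semi-proper, i.e. for every point s ∈ S there exist an open neighbourhood V of s in S and a compact subset K of M such that for every σ ∈ V whose fibre f⁻¹(σ) is nonempty, the fibre f⁻¹(σ) meets K. Then the image f(M) is a closed subset of S. -/
/-- A continuous map `f : M → S` is *semi-proper* if for every `s ∈ S` there exist an open
neighbourhood `V` of `s` and a compact subset `K` of `M` such that every nonempty fibre
`f⁻¹(σ)` over a point `σ ∈ V` meets `K`. -/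
def SemiProper {M S : Type*} [TopologicalSpace M] [TopologicalSpace S] (f : M → S) : Prop :=
  ∀ s : S, ∃ V : Set S, IsOpen V ∧ s ∈ V ∧ ∃ K : Set M, IsCompact K ∧
    ∀ σ ∈ V, (f ⁻¹' {σ}).Nonempty → (K ∩ f ⁻¹' {σ}).Nonempty

/-- If `f : M → S` is a continuous semi-proper map into a Hausdorff space `S`, then the
image `f(M)` is closed in `S`. -/
theorem semiProper_image_isClosed {M S : Type*} [TopologicalSpace M] [TopologicalSpace S]
    [T2Space S] (f : M → S) (hf : Continuous f) (hsp : SemiProper f) :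
    IsClosed (Set.range f) := by
  refine closure_subset_iff_isClosed.mp ?_
  intro s hs
  obtain ⟨V, hVopen, hsV, K, hKcomp, hK⟩ := hsp s
  have hsub : Set.range f ∩ V ⊆ f '' K := by
    rintro σ ⟨⟨m, hm⟩, hσV⟩
    obtain ⟨k, hkK, hkf⟩ := hK σ hσV ⟨m, hm⟩
    exact ⟨k, hkK, hkf⟩
  have hclosed : IsClosed (f '' K) := (hKcomp.image hf).isClosed
  have : s ∈ closure (Set.range f ∩ V) := by
    rw [mem_closure_iff_nhdsWithin_neBot] at hs ⊢
    have : nhdsWithin s (Set.range f ∩ V) = nhdsWithin s (Set.range f) := by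
      rw [Set.inter_comm, nhdsWithin_inter_of_mem (hVopen.mem_nhds hsV |> mem_nhdsWithin_of_mem_nhds)]
    rwa [this]
  have : s ∈ f '' K := hclosed.closure_subset ((closure_mono hsub) this)
  exact ⟨this.choose, this.choose_spec.2⟩
end

section
/- Let g : M → T be a continuous map between topological spaces with T Hausdorff. Let D ⊆ M be a subset whose closure cl(D) in M is compact, and let W ⊆ T be an open subset such that cl(D) ∩ g⁻¹(W) ⊆ D. Then the restriction of g to a map from D to W (both equipped with the subspace topologies) is a closed map all of whose fibres are compact; in particular this restriction is a proper map. -/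
/-- Let `g : M → T` be a continuous map between topological spaces with `T` Hausdorff,
`D ⊆ M` a subset with compact closure, and `W ⊆ T` an open subset such that
`closure D ∩ g⁻¹(W) ⊆ D`.  Then the restriction of `g` to a map from `D` to `W`
(with the subspace topologies) is a closed map all of whose fibres are compact;
in particular it is a proper map. -/
theorem restriction_isClosedMap_compact_fibers_isProperMap
    {M T : Type*} [TopologicalSpace M] [TopologicalSpace T] [T2Space T]
    (g : M → T) (hg : Continuous g) (D : Set M) (hD : IsCompact (closure D))
    (W : Set T) (hW : IsOpen W) (hDW : closure D ∩ g ⁻¹' W ⊆ D) :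
    IsClosedMap (W.restrictPreimage (D.restrict g)) ∧
      (∀ w : W, IsCompact ((W.restrictPreimage (D.restrict g)) ⁻¹' {w})) ∧
      IsProperMap (W.restrictPreimage (D.restrict g)) := by
  set f := W.restrictPreimage (D.restrict g) with hf
  -- the inclusion of the domain into M
  set e : ↥(D.restrict g ⁻¹' W) → M := fun x => (x.1 : M) with he
  have he_emb : Topology.IsEmbedding e :=
    Topology.IsEmbedding.subtypeVal.comp Topology.IsEmbedding.subtypeVal
  have hrange : Set.range e = D ∩ g ⁻¹' W := by
    ext x
    constructor
    · rintro ⟨⟨⟨y, hy⟩, hyW⟩, rfl⟩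
      exact ⟨hy, hyW⟩
    · rintro ⟨hxD, hxW⟩
      exact ⟨⟨⟨x, hxD⟩, hxW⟩, rfl⟩
  have hcont : Continuous f := Continuous.restrictPreimage ((hg.comp continuous_subtype_val))
  have hclosed : IsClosedMap f := by
    intro C hC
    -- C is closed in the subtype: C = e ⁻¹' C₀ for some closed C₀
    obtain ⟨C₀, hC₀, rfl⟩ := he_emb.isClosed_iff.mp hC
    -- the image in W corresponds to W ∩ g '' (C₀ ∩ closure D)
    have hFcomp : IsCompact (C₀ ∩ closure D) := hD.inter_left hC₀
    have hFclosed : IsClosed (g '' (C₀ ∩ closure D)) := (hFcomp.image hg).isClosed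
    rw [Topology.IsEmbedding.subtypeVal.isClosed_iff]
    refine ⟨g '' (C₀ ∩ closure D), hFclosed, ?_⟩
    ext w
    simp only [Set.mem_preimage, Set.mem_image]
    constructor
    · rintro ⟨x, ⟨hxC, hxcl⟩, hxw⟩
      have hxW : x ∈ g ⁻¹' W := by rw [Set.mem_preimage, hxw]; exact w.2
      have hxD : x ∈ D := hDW ⟨hxcl, hxW⟩
      refine ⟨⟨⟨x, hxD⟩, hxW⟩, hxC, ?_⟩
      exact Subtype.ext hxw
    · rintro ⟨x, hx, rfl⟩
      exact ⟨e x, ⟨hx, subset_closure (x.1).2⟩, rfl⟩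
  have hfib : ∀ w : W, IsCompact (f ⁻¹' {w}) := by
    intro w
    rw [he_emb.isCompact_iff]
    have : e '' (f ⁻¹' {w}) = closure D ∩ g ⁻¹' {(w : T)} := by
      ext x
      constructor
      · rintro ⟨y, hy, rfl⟩
        have : g (e y) = w := congrArg Subtype.val (Set.mem_singleton_iff.mp hy)
        exact ⟨subset_closure (y.1).2, this⟩
      · rintro ⟨hxcl, hxw⟩
        have hxW : x ∈ g ⁻¹' W := by rw [Set.mem_preimage, Set.mem_singleton_iff.mp hxw]; exact w.2
        have hxD : x ∈ D := hDW ⟨hxcl, hxW⟩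
        exact ⟨⟨⟨x, hxD⟩, hxW⟩, Subtype.ext hxw, rfl⟩
    rw [this]
    exact hD.inter_right (isClosed_singleton.preimage hg)
  exact ⟨hclosed, hfib,
    isProperMap_iff_isClosedMap_and_compact_fibers.mpr ⟨hcont, hclosed, hfib⟩⟩
end

section
/- Let E be a complex Banach space, let u ∈ E, and let (x_n)_{n∈ℕ} be a countable family of vectors of E such that x_n does not belong to the line ℂ·u for every n ∈ ℕ. Then there exists a continuous linear functional f : E → ℂ such that f(u) = 0 and f(x_n) ≠ 0 for every n ∈ ℕ. -/
/-!
By Hahn–Banach (applied in `E ⧸ ℂ·u`), for each `n` the closed hyperplane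
`H = {f ∈ E* | f u = 0}` is not contained in the closed subspace `{f | f (x n) = 0}`.
Since `E*` is complete, so is `H`, and by Baire's theorem the countably many proper closed
subspaces `H ∩ {f | f (x n) = 0}` of `H` cannot cover it.
-/

open Set

theorem Submodule.dense_compl_of_ne_top {𝕜 X : Type*} [NontriviallyNormedField 𝕜]
    [AddCommGroup X] [Module 𝕜 X] [TopologicalSpace X] [ContinuousAdd X] [ContinuousSMul 𝕜 X]
    {p : Submodule 𝕜 X} (hp : p ≠ ⊤) : Dense (p : Set X)ᶜ := by
  rw [← interior_eq_empty_iff_dense_compl, ← not_nonempty_iff_eq_empty]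
  exact fun h => hp (p.eq_top_of_nonempty_interior' h)

theorem ContinuousLinearMap.exists_forall_apply_ne_zero_of_baireSpace
    {𝕜 X Y ι : Type*} [NontriviallyNormedField 𝕜] [Countable ι]
    [AddCommGroup X] [Module 𝕜 X] [TopologicalSpace X] [ContinuousAdd X] [ContinuousSMul 𝕜 X]
    [BaireSpace X] [AddCommGroup Y] [Module 𝕜 Y] [TopologicalSpace Y] [T1Space Y]
    (g : ι → X →L[𝕜] Y) (hg : ∀ i, g i ≠ 0) : ∃ y, ∀ i, g i y ≠ 0 := by
  have hopen : ∀ i, IsOpen (LinearMap.ker (g i : X →ₗ[𝕜] Y) : Set X)ᶜ :=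
    fun i => (g i).isClosed_ker.isOpen_compl
  have hdense : ∀ i, Dense (LinearMap.ker (g i : X →ₗ[𝕜] Y) : Set X)ᶜ := fun i =>
    Submodule.dense_compl_of_ne_top fun h => hg i (ext fun y => LinearMap.mem_ker.1 (h ▸ trivial))
  obtain ⟨y, hy⟩ := (dense_iInter_of_isOpen hopen hdense).nonempty
  exact ⟨y, fun i => by simpa using mem_iInter.1 hy i⟩

theorem exists_strongDual_eq_zero_ne_zero {𝕜 E : Type*} [RCLike 𝕜] [NormedAddCommGroup E]
    [NormedSpace 𝕜 E] {S : Submodule 𝕜 E} (hS : IsClosed (S : Set E)) {v : E} (hv : v ∉ S) :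
    ∃ f : StrongDual 𝕜 E, (∀ s ∈ S, f s = 0) ∧ f v ≠ 0 := by
  have := hS
  have hv' : S.mkQL v ≠ 0 := by simpa [Submodule.Quotient.mk_eq_zero] using hv
  obtain ⟨g, hg⟩ := SeparatingDual.exists_ne_zero (R := 𝕜) hv'
  refine ⟨g.comp S.mkQL, fun s hs => ?_, hg⟩
  simp [(Submodule.Quotient.mk_eq_zero S).2 hs]

theorem exists_continuous_functional_vanishing_at_avoiding_countably_many_general
    {E : Type*} [NormedAddCommGroup E] [NormedSpace ℂ E]
    (u : E) (x : ℕ → E) (hx : ∀ n, x n ∉ Submodule.span ℂ ({u} : Set E)) :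
    ∃ f : E →L[ℂ] ℂ, f u = 0 ∧ ∀ n, f (x n) ≠ 0 := by
  set H := LinearMap.ker (ContinuousLinearMap.apply ℂ ℂ u : (E →L[ℂ] ℂ) →ₗ[ℂ] ℂ)
  have : TopologicalSpace.IsCompletelyPseudoMetrizableSpace H :=
    (ContinuousLinearMap.isClosed_ker _).isCompletelyPseudoMetrizableSpace
  have : BaireSpace H := BaireSpace.of_completelyPseudoMetrizable
  have hH : ∀ n, (ContinuousLinearMap.apply ℂ ℂ (x n)).comp H.subtypeL ≠ 0 := fun n => by
    obtain ⟨f, hfu, hfx⟩ := exists_strongDual_eq_zero_ne_zero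
      (Submodule.closed_of_finiteDimensional _) (hx n)
    exact ne_of_apply_ne (· ⟨f, hfu u (Submodule.mem_span_singleton_self u)⟩) hfx
  obtain ⟨⟨f, hfu⟩, hf⟩ := ContinuousLinearMap.exists_forall_apply_ne_zero_of_baireSpace _ hH
  exact ⟨f, hfu, hf⟩

/-- Let `E` be a complex Banach space, `u ∈ E` and `(xₙ)` a countable family of vectors
of `E` none of which lies on the line `ℂ·u`.  Then there is a continuous linear
functional `f : E → ℂ` with `f(u) = 0` and `f(xₙ) ≠ 0` for every `n`. -/
theorem exists_continuous_functional_vanishing_at_avoiding_countably_many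
    {E : Type*} [NormedAddCommGroup E] [NormedSpace ℂ E] [CompleteSpace E]
    (u : E) (x : ℕ → E) (hx : ∀ n, x n ∉ Submodule.span ℂ ({u} : Set E)) :
    ∃ f : E →L[ℂ] ℂ, f u = 0 ∧ ∀ n, f (x n) ≠ 0 :=
  exists_continuous_functional_vanishing_at_avoiding_countably_many_general u x hx
end
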